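/- Let X be a normed space and Φ, Ψ : X → ℝ. Suppose that for some r and nonempty set S = {u ∈ X : Φ(u) < r}, for each λ > 0 the infimum m_λ := inf_{u ∈ S} (Φ(u)/λ - Ψ(u)) is attained at some u_λ ∈ S, and that m_λ < 0 for all λ in an interval (0, Λ). Then the map λ ↦ λ · m_λ (the minimal energy I_λ(u_λ) = Φ(u_λ) - λ Ψ(u_λ)) is strictly decreasing on (0, Λ). -/

import Mathlib

/-!
Test the minimiser `u = u_{λ₁}` in the problem at `λ₂`: this gives
`λ₂ m_{λ₂} ≤ Φ(u) - λ₂ Ψ(u)`. Since `m_{λ₁} < 0` and `Φ(u) ≥ 0`, we have `Ψ(u) > 0`, so the right-hand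
side is strictly smaller than `Φ(u) - λ₁ Ψ(u) = λ₁ m_{λ₁}`.
-/

theorem pos_of_div_sub_neg {a b l : ℝ} (ha : 0 ≤ a) (hl : 0 < l) (h : a / l - b < 0) : 0 < b := by
  have := div_nonneg ha hl.le
  linarith

theorem mul_div_sub_eq {a b l : ℝ} (hl : l ≠ 0) : l * (a / l - b) = a - l * b := by
  rw [mul_sub, mul_div_cancel₀ _ hl]

theorem minimal_energy_strictly_decreasing_general
    {X : Type*}
    (Φ Ψ : X → ℝ) (S : Set X)
    (hΦnonneg : ∀ u ∈ S, 0 ≤ Φ u)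
    (Λ : ℝ) (m : ℝ → ℝ) (uu : ℝ → X)
    (hmem : ∀ l : ℝ, 0 < l → l < Λ → uu l ∈ S)
    (hval : ∀ l : ℝ, 0 < l → l < Λ → m l = Φ (uu l) / l - Ψ (uu l))
    (hinf : ∀ l : ℝ, 0 < l → l < Λ → ∀ u ∈ S, m l ≤ Φ u / l - Ψ u)
    (hneg : ∀ l : ℝ, 0 < l → l < Λ → m l < 0) :
    ∀ l₁ l₂ : ℝ, 0 < l₁ → l₁ < l₂ → l₂ < Λ → l₂ * m l₂ < l₁ * m l₁ := by
  intro l₁ l₂ hl₁ hl₁₂ hl₂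
  have hl₁Λ : l₁ < Λ := hl₁₂.trans hl₂
  have hl₂pos : 0 < l₂ := hl₁.trans hl₁₂
  have hu : uu l₁ ∈ S := hmem l₁ hl₁ hl₁Λ
  have hΨ : 0 < Ψ (uu l₁) :=
    pos_of_div_sub_neg (hΦnonneg _ hu) hl₁ (hval l₁ hl₁ hl₁Λ ▸ hneg l₁ hl₁ hl₁Λ)
  calc l₂ * m l₂ ≤ l₂ * (Φ (uu l₁) / l₂ - Ψ (uu l₁)) :=
        mul_le_mul_of_nonneg_left (hinf l₂ hl₂pos hl₂ _ hu) hl₂pos.le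
    _ = Φ (uu l₁) - l₂ * Ψ (uu l₁) := mul_div_sub_eq hl₂pos.ne'
    _ < Φ (uu l₁) - l₁ * Ψ (uu l₁) := by gcongr
    _ = l₁ * m l₁ := by rw [hval l₁ hl₁ hl₁Λ, mul_div_sub_eq hl₁.ne']

/-- The map `λ ↦ λ · m_λ = I_λ(u_λ)` is strictly decreasing on `(0, Λ)`, where
`m_λ = inf_{u ∈ S}(Φ(u)/λ - Ψ(u))` is attained at `u_λ ∈ S`, `m_λ < 0` and `Φ ≥ 0` on `S`. -/
theorem minimal_energy_strictly_decreasing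
    {X : Type*} [NormedAddCommGroup X] [NormedSpace ℝ X]
    (Φ Ψ : X → ℝ) (S : Set X) (hS : S.Nonempty)
    (hΦnonneg : ∀ u ∈ S, 0 ≤ Φ u)
    (Λ : ℝ) (m : ℝ → ℝ) (uu : ℝ → X)
    (hmem : ∀ l : ℝ, 0 < l → l < Λ → uu l ∈ S)
    (hval : ∀ l : ℝ, 0 < l → l < Λ → m l = Φ (uu l) / l - Ψ (uu l))
    (hinf : ∀ l : ℝ, 0 < l → l < Λ → ∀ u ∈ S, m l ≤ Φ u / l - Ψ u)
    (hneg : ∀ l : ℝ, 0 < l → l < Λ → m l < 0) :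
    ∀ l₁ l₂ : ℝ, 0 < l₁ → l₁ < l₂ → l₂ < Λ → l₂ * m l₂ < l₁ * m l₁ :=
  minimal_energy_strictly_decreasing_general Φ Ψ S hΦnonneg Λ m uu hmem hval hinf hneg
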